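/- arXiv:1701.05989 — 6 statements merged into one kernel-verified Lean document; each statement's English description precedes it below -/
import Mathlib

section
/- Let C be a linear subspace of 𝔽₂ⁿ of dimension k whose nonzero vectors all have Hamming weight at least d, and suppose C has locality r, witnessed by a finite set H ⊆ C⊥ of vectors each of Hamming weight at most r+1 whose supports cover {1,…,n}. Let V = {v ∈ 𝔽₂ⁿ : v·h = 0 for all h ∈ H}. Then 2^k · |{v ∈ V : wt(v) ≤ ⌊(d−1)/2⌋}| ≤ 2^{dim V}; equivalently, k ≤ dim V − log₂|{v ∈ V : wt(v) ≤ ⌊(d−1)/2⌋}|. -/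
/-!
Sphere packing inside `V`: since every local check lies in `C⊥`, the code `C` is contained in
`V`. Hamming balls of radius `⌊(d-1)/2⌋` around distinct codewords are disjoint, so
`(c, b) ↦ c + b` embeds `C × (ball ∩ V)` into `V`.
-/

section SpherePacking

variable {ι : Type*} [Fintype ι] {β : ι → Type*} [∀ i, AddCommGroup (β i)]
  [∀ i, DecidableEq (β i)]

theorem hammingNorm_sub_le_add (x y : ∀ i, β i) :
    hammingNorm (x - y) ≤ hammingNorm x + hammingNorm y := by
  rw [sub_eq_neg_add, ← hammingDist_eq_hammingNorm, ← hammingDist_zero_right x,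
    ← hammingDist_zero_right y]
  exact (hammingDist_comm y x).trans_le (hammingDist_triangle_right x y 0)

theorem eq_of_add_eq_add_of_hammingNorm_le {C : AddSubgroup (∀ i, β i)} {d : ℕ}
    (hdist : ∀ c ∈ C, c ≠ 0 → d ≤ hammingNorm c) {c₁ c₂ v₁ v₂ : ∀ i, β i}
    (hc₁ : c₁ ∈ C) (hc₂ : c₂ ∈ C) (hv₁ : hammingNorm v₁ ≤ (d - 1) / 2)
    (hv₂ : hammingNorm v₂ ≤ (d - 1) / 2) (h : c₁ + v₁ = c₂ + v₂) : c₁ = c₂ := by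
  by_contra hne
  have hsub : c₁ - c₂ = v₂ - v₁ := by
    rw [sub_eq_sub_iff_add_eq_add, h, add_comm]
  have hpos : 0 < hammingNorm (c₁ - c₂) := hammingNorm_pos_iff.mpr (sub_ne_zero.mpr hne)
  have hd := hdist _ (C.sub_mem hc₁ hc₂) (sub_ne_zero.mpr hne)
  have hsmall := hammingNorm_sub_le_add v₂ v₁
  rw [← hsub] at hsmall
  omega

theorem natCard_mul_ncard_ball_le [∀ i, Finite (β i)] {C V : AddSubgroup (∀ i, β i)}
    (hCV : C ≤ V) {d : ℕ} (hdist : ∀ c ∈ C, c ≠ 0 → d ≤ hammingNorm c) :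
    Nat.card C * {v ∈ (V : Set (∀ i, β i)) | hammingNorm v ≤ (d - 1) / 2}.ncard ≤
      Nat.card V := by
  set B := {v ∈ (V : Set (∀ i, β i)) | hammingNorm v ≤ (d - 1) / 2}
  rw [← Nat.card_coe_set_eq, ← Nat.card_prod]
  refine Nat.card_le_card_of_injective
    (fun p : C × B => (⟨p.1 + p.2, V.add_mem (hCV p.1.2) p.2.2.1⟩ : V)) ?_
  rintro ⟨⟨c₁, hc₁⟩, ⟨v₁, hv₁⟩⟩ ⟨⟨c₂, hc₂⟩, ⟨v₂, hv₂⟩⟩ h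
  have h : c₁ + v₁ = c₂ + v₂ := congrArg Subtype.val h
  obtain rfl := eq_of_add_eq_add_of_hammingNorm_le hdist hc₁ hc₂ hv₁.2 hv₂.2 h
  obtain rfl := add_left_cancel h
  rfl

end SpherePacking

theorem stmt_1_general (n k d : ℕ)
    (C : Submodule (ZMod 2) (Fin n → ZMod 2))
    (hk : Module.finrank (ZMod 2) C = k)
    (hdist : ∀ c ∈ C, c ≠ 0 → d ≤ hammingNorm c)
    (H : Finset (Fin n → ZMod 2))
    (hdual : ∀ h ∈ H, ∀ c ∈ C, ∑ i, h i * c i = 0)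
    (V : Submodule (ZMod 2) (Fin n → ZMod 2))
    (hV : (V : Set (Fin n → ZMod 2)) = {v | ∀ h ∈ H, ∑ i, v i * h i = 0}) :
    2 ^ k *
      Set.ncard {v ∈ (V : Set (Fin n → ZMod 2)) | hammingNorm v ≤ (d - 1) / 2} ≤
    2 ^ Module.finrank (ZMod 2) V := by
  have hCV : C ≤ V := fun c hc => by
    rw [← SetLike.mem_coe, hV]
    intro h hh
    simpa only [mul_comm] using hdual h hh c hc
  have hcard (W : Submodule (ZMod 2) (Fin n → ZMod 2)) :
      Nat.card W = 2 ^ Module.finrank (ZMod 2) W := by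
    rw [Module.natCard_eq_pow_finrank (K := ZMod 2), Nat.card_zmod]
  rw [← hk, ← hcard, ← hcard]
  exact natCard_mul_ncard_ball_le (C := C.toAddSubgroup) (V := V.toAddSubgroup) hCV hdist

/-- Proposition 1 of the paper: sphere-packing bound in an ℒ-space.
`C` is an `[n,k,d]` binary LRC with locality `r` witnessed by a set `H ⊆ C⊥` of
local parity checks of weight at most `r+1` whose supports cover all coordinates,
and `V = Span(H)⊥` is the corresponding ℒ-space.  Then
`2^k · |{v ∈ V : wt v ≤ ⌊(d−1)/2⌋}| ≤ 2^(dim V)`. -/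
theorem stmt_1 (n k d r : ℕ)
    (C : Submodule (ZMod 2) (Fin n → ZMod 2))
    (hk : Module.finrank (ZMod 2) C = k)
    (hdist : ∀ c ∈ C, c ≠ 0 → d ≤ hammingNorm c)
    (H : Finset (Fin n → ZMod 2))
    (hdual : ∀ h ∈ H, ∀ c ∈ C, ∑ i, h i * c i = 0)
    (hwt : ∀ h ∈ H, hammingNorm h ≤ r + 1)
    (hcover : ∀ i : Fin n, ∃ h ∈ H, h i ≠ 0)
    (V : Submodule (ZMod 2) (Fin n → ZMod 2))
    (hV : (V : Set (Fin n → ZMod 2)) = {v | ∀ h ∈ H, ∑ i, v i * h i = 0}) :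
    2 ^ k *
      Set.ncard {v ∈ (V : Set (Fin n → ZMod 2)) | hammingNorm v ≤ (d - 1) / 2} ≤
    2 ^ Module.finrank (ZMod 2) V :=
  stmt_1_general n k d C hk hdist H hdual V hV
end

section
/- Let h₁,…,h_l ∈ 𝔽₂ⁿ be vectors with pairwise disjoint supports whose supports together cover {1,…,n}, and suppose wt(h_j) = r_j + 1 for each j (with integers r_j ≥ 0). Let V = {v ∈ 𝔽₂ⁿ : v·h_j = 0 for all j ∈ {1,…,l}}. Then dim V = n − l, every vector of V has even Hamming weight, and for every integer s ≥ 0, |{v ∈ V : wt(v) ≤ s}| = Σ over tuples of nonnegative integers (i₁,…,i_l) with i₁+⋯+i_l ≤ ⌊s/2⌋ of Π_{j=1}^{l} C(r_j+1, 2i_j), where C(a,b) denotes the binomial coefficient. -/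
/-!
Disjoint supports covering all coordinates make the `h j` the indicator vectors of the blocks of
a partition `π : Fin n → Fin l` of the coordinates, so `v ∈ V` says exactly that `v` has even
weight on every block. Hence `V` is the kernel of the surjective map summing coordinates over
blocks, the weight of `v ∈ V` is a sum of even block weights, and a vector of `V` of weight
at most `s` amounts to choosing, in block `j`, a subset of even size `2 i_j` with
`∑ i_j ≤ s / 2`.
-/

open Finset

section FiberCount

variable {α β : Type*} [DecidableEq β] (π : α → β)

def fiberCount (S : Finset α) (b : β) : ℕ := #{a ∈ S | π a = b}

lemma card_eq_sum_fiberCount [Fintype β] (S : Finset α) : #S = ∑ b, fiberCount π S b :=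
  card_eq_sum_card_fiberwise fun _ _ => mem_univ _

variable [Fintype α] [DecidableEq α] [Fintype β]

lemma card_filter_fiberCount_eq (m : β → ℕ) :
    #{S : Finset α | fiberCount π S = m} = ∏ b, (#{a | π a = b}).choose (m b) := by
  simp_rw [← card_powersetCard, ← Fintype.card_piFinset]
  have hsub : ∀ x ∈ Fintype.piFinset fun b => powersetCard (m b) {a | π a = b},
      ∀ b, ∀ a ∈ x b, π a = b := fun x hx b a ha =>
    (mem_filter.1 ((mem_powersetCard.1 (Fintype.mem_piFinset.1 hx b)).1 ha)).2
  have hsplit : ∀ x ∈ Fintype.piFinset fun b => powersetCard (m b) {a | π a = b},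
      ∀ b, ({a | a ∈ x (π a)} : Finset α).filter (π · = b) = x b := by
    intro x hx b
    ext a
    simp only [mem_filter, mem_univ, true_and]
    exact ⟨fun ⟨ha, hab⟩ => hab ▸ ha, fun ha => ⟨(hsub x hx b a ha).symm ▸ ha, hsub x hx b a ha⟩⟩
  refine card_nbij' (fun S b => {a ∈ S | π a = b}) (fun x => ({a | a ∈ x (π a)} : Finset α))
    ?_ ?_ ?_ ?_
  · intro S hS
    simp only [coe_filter, mem_univ, true_and, Set.mem_ofPred_eq, funext_iff, fiberCount] at hS
    simp only [mem_coe, Fintype.mem_piFinset, mem_powersetCard]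
    exact fun b => ⟨filter_subset_filter _ (subset_univ S), hS b⟩
  · intro x hx
    simp only [coe_filter, mem_univ, true_and, Set.mem_ofPred_eq]
    ext b
    rw [fiberCount, hsplit x hx b]
    exact (mem_powersetCard.1 (Fintype.mem_piFinset.1 hx b)).2
  · intro S _
    ext a
    simp
  · intro x hx
    exact funext (hsplit x hx)

lemma card_filter_even_fiberCount_card_le (s : ℕ) :
    #{S : Finset α | (∀ b, Even (fiberCount π S b)) ∧ #S ≤ s} =
      ∑ x ∈ {x ∈ Fintype.piFinset fun _ : β => range (s / 2 + 1) | ∑ b, x b ≤ s / 2},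
        ∏ b, (#{a | π a = b}).choose (2 * x b) := by
  have hmaps : Set.MapsTo (fun S b => fiberCount π S b / 2)
      (({S : Finset α | (∀ b, Even (fiberCount π S b)) ∧ #S ≤ s} : Finset _) : Set _)
      (({x ∈ Fintype.piFinset fun _ : β => range (s / 2 + 1) | ∑ b, x b ≤ s / 2} : Finset _) :
        Set _) := by
    intro S hS
    simp only [coe_filter, mem_univ, true_and, Set.mem_ofPred_eq] at hS
    obtain ⟨heven, hle⟩ := hS
    have hhalf : ∑ b, fiberCount π S b / 2 ≤ s / 2 := by
      have : 2 * ∑ b, fiberCount π S b / 2 = #S := by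
        rw [card_eq_sum_fiberCount π, mul_sum]
        exact sum_congr rfl fun b _ => Nat.two_mul_div_two_of_even (heven b)
      omega
    simp only [coe_filter, Fintype.mem_piFinset, mem_range, Set.mem_ofPred_eq]
    refine ⟨fun b => ?_, hhalf⟩
    have := single_le_sum (f := fun b => fiberCount π S b / 2) (fun _ _ => Nat.zero_le _)
      (mem_univ b)
    omega
  rw [card_eq_sum_card_fiberwise hmaps]
  refine sum_congr rfl fun x hx => ?_
  rw [← card_filter_fiberCount_eq, filter_filter]
  congr 1
  refine filter_congr fun S _ => ?_
  simp only [mem_filter, Fintype.mem_piFinset, mem_range] at hx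
  simp only [funext_iff, card_eq_sum_fiberCount π S]
  constructor
  · rintro ⟨⟨heven, -⟩, hx⟩ b
    rw [← hx b, Nat.two_mul_div_two_of_even (heven b)]
  · intro hS
    simp only [hS, even_two_mul, implies_true, true_and, ← mul_sum]
    refine ⟨by omega, fun b => by omega⟩

end FiberCount

section FiberSum

variable {R ι κ : Type*} [Semiring R] [Fintype ι] [DecidableEq κ] (π : ι → κ)

def fiberSum : (ι → R) →ₗ[R] κ → R where
  toFun v b := ∑ i with π i = b, v i
  map_add' v w := by ext b; simp [sum_add_distrib]
  map_smul' c v := by ext b; simp [mul_sum]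

lemma fiberSum_apply (v : ι → R) (b : κ) : fiberSum π v b = ∑ i with π i = b, v i := rfl

lemma fiberSum_single [DecidableEq ι] (i : ι) (a : R) :
    fiberSum π (Pi.single i a) = Pi.single (π i) a := by
  ext b
  rw [fiberSum_apply, sum_pi_single']
  by_cases h : π i = b
  · subst h; simp
  · simp [h, Ne.symm h]

lemma fiberSum_surjective [Fintype κ] (hπ : π.Surjective) :
    Function.Surjective (fiberSum (R := R) π) := by
  classical
  obtain ⟨σ, hσ⟩ := hπ.hasRightInverse
  intro w
  refine ⟨∑ b, Pi.single (σ b) (w b), ?_⟩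
  simp only [map_sum, fiberSum_single, hσ _, univ_sum_single]

lemma finrank_ker_fiberSum {K : Type*} [Field K] [Fintype κ] (hπ : π.Surjective) :
    Module.finrank K (LinearMap.ker (fiberSum (R := K) π)) =
      Fintype.card ι - Fintype.card κ := by
  have := LinearMap.finrank_range_add_finrank_ker (fiberSum (R := K) π)
  rw [LinearMap.range_eq_top.2 (fiberSum_surjective π hπ), finrank_top,
    Module.finrank_fintype_fun_eq_card, Module.finrank_fintype_fun_eq_card] at this
  omega

end FiberSum

lemma sum_zmod_two_eq_card {ι : Type*} (s : Finset ι) (v : ι → ZMod 2) :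
    ∑ i ∈ s, v i = #{i ∈ s | v i ≠ 0} := by
  have : ∀ a : ZMod 2, a = if a ≠ 0 then 1 else 0 := by decide
  rw [natCast_card_filter]
  exact sum_congr rfl fun i _ => this (v i)

section ZModTwo

variable {ι : Type*} [Fintype ι] [DecidableEq ι]

def supportEquiv : (ι → ZMod 2) ≃ Finset ι where
  toFun v := {i | v i ≠ 0}
  invFun S i := if i ∈ S then 1 else 0
  left_inv v := by
    ext i
    have : ∀ a : ZMod 2, (if a ≠ 0 then 1 else 0) = a := by decide
    simpa using this (v i)
  right_inv S := by ext; simp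

lemma hammingNorm_eq_card_supportEquiv (v : ι → ZMod 2) :
    hammingNorm v = #(supportEquiv v) := rfl

lemma fiberSum_zmod_two_eq_zero_iff {κ : Type*} [DecidableEq κ] (π : ι → κ) (v : ι → ZMod 2) :
    fiberSum π v = 0 ↔ ∀ b, Even (fiberCount π (supportEquiv v) b) := by
  refine funext_iff.trans (forall_congr' fun b => ?_)
  rw [fiberSum_apply, sum_zmod_two_eq_card, Pi.zero_apply, ZMod.natCast_eq_zero_iff_even,
    fiberCount, supportEquiv, Equiv.coe_fn_mk, filter_filter, filter_filter]
  simp only [and_comm]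

end ZModTwo

lemma exists_eq_ite_of_disjoint_support {ι κ : Type*} [DecidableEq κ] (h : κ → ι → ZMod 2)
    (hdisj : ∀ j j', j ≠ j' → ∀ i, h j i = 0 ∨ h j' i = 0) (hcover : ∀ i, ∃ j, h j i ≠ 0) :
    ∃ π : ι → κ, ∀ j i, h j i = if π i = j then 1 else 0 := by
  choose π hπ using hcover
  refine ⟨π, fun j i => ?_⟩
  split_ifs with hj
  · subst hj
    have : ∀ a : ZMod 2, a ≠ 0 → a = 1 := by decide
    exact this _ (hπ i)
  · exact (hdisj j (π i) (Ne.symm hj) i).resolve_right (hπ i)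

/-- Weight distribution of the dual of a direct sum of single parity checks:
if `h₁,…,h_l` have pairwise disjoint supports covering `{1,…,n}` with
`wt(h_j) = r_j + 1`, and `V = {v : v·h_j = 0 ∀j}`, then `dim V = n − l`,
every vector of `V` has even weight, and
`|{v ∈ V : wt v ≤ s}| = Σ_{i₁+⋯+i_l ≤ ⌊s/2⌋} Π_j C(r_j+1, 2i_j)`. -/
theorem stmt_2 (n l : ℕ) (r : Fin l → ℕ) (h : Fin l → (Fin n → ZMod 2))
    (hwt : ∀ j, hammingNorm (h j) = r j + 1)
    (hdisj : ∀ j j', j ≠ j' → ∀ i, h j i = 0 ∨ h j' i = 0)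
    (hcover : ∀ i : Fin n, ∃ j, h j i ≠ 0)
    (V : Submodule (ZMod 2) (Fin n → ZMod 2))
    (hV : (V : Set (Fin n → ZMod 2)) = {v | ∀ j, ∑ i, v i * h j i = 0}) :
    Module.finrank (ZMod 2) V = n - l ∧
    (∀ v ∈ V, Even (hammingNorm v)) ∧
    ∀ s : ℕ,
      Set.ncard {v ∈ (V : Set (Fin n → ZMod 2)) | hammingNorm v ≤ s} =
        ∑ x ∈ Finset.filter (fun x => ∑ j, x j ≤ s / 2)
            (Fintype.piFinset fun _ : Fin l => Finset.range (s / 2 + 1)),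
          ∏ j, Nat.choose (r j + 1) (2 * x j) := by
  obtain ⟨π, hπ⟩ := exists_eq_ite_of_disjoint_support h hdisj hcover
  have hfiber : ∀ j, #{i | π i = j} = r j + 1 := fun j => by
    rw [← hwt j, hammingNorm]
    simp [hπ]
  have hsurj : π.Surjective := fun j => by
    obtain ⟨i, hi⟩ := card_pos.1 (hfiber j ▸ Nat.succ_pos _ : 0 < #{i | π i = j})
    exact ⟨i, (mem_filter.1 hi).2⟩
  have hV_eq : V = LinearMap.ker (fiberSum π) := by
    ext v
    rw [← SetLike.mem_coe, hV, LinearMap.mem_ker, funext_iff]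
    simp [fiberSum_apply, hπ, sum_filter]
  have hmem : ∀ v, v ∈ V ↔ ∀ j, Even (fiberCount π (supportEquiv v) j) := fun v => by
    rw [hV_eq, LinearMap.mem_ker, fiberSum_zmod_two_eq_zero_iff]
  refine ⟨?_, fun v hv => ?_, fun s => ?_⟩
  · rw [hV_eq, finrank_ker_fiberSum π hsurj, Fintype.card_fin, Fintype.card_fin]
  · rw [hammingNorm_eq_card_supportEquiv, card_eq_sum_fiberCount π]
    exact even_sum _ fun j _ => (hmem v).1 hv j
  · have hset : {v ∈ (V : Set (Fin n → ZMod 2)) | hammingNorm v ≤ s} =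
        ↑({v | (∀ j, Even (fiberCount π (supportEquiv v) j)) ∧ #(supportEquiv v) ≤ s} :
          Finset (Fin n → ZMod 2)) := by
      ext v
      simp [hmem, hammingNorm_eq_card_supportEquiv]
    rw [hset, Set.ncard_coe_finset,
      card_equiv (t := {S | (∀ j, Even (fiberCount π S j)) ∧ #S ≤ s}) supportEquiv (by simp)]
    -- `convert` also reconciles the two `Decidable (∀ j : Fin l, _)` instances.
    convert card_filter_even_fiberCount_card_le π s using 3
    rw [hfiber]
end

section
/- Let C be a k-dimensional linear subspace of 𝔽₂ⁿ whose nonzero vectors all have Hamming weight at least d, and suppose there exist vectors h₁,…,h_l ∈ C⊥, each of Hamming weight exactly r+1, with pairwise disjoint supports whose union is {1,…,n} (so n = l(r+1)). Then 2^k · ( Σ over tuples of nonnegative integers (i₁,…,i_l) with i₁+⋯+i_l ≤ ⌊(d−1)/4⌋ of Π_{j=1}^{l} C(r+1, 2i_j) ) ≤ 2^{rn/(r+1)}; equivalently, k ≤ rn/(r+1) − log₂( Σ_{0 ≤ i₁+⋯+i_l ≤ ⌊(d−1)/4⌋} Π_{j=1}^{l} C(r+1, 2i_j) ). -/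
/-!
The parity checks of the repair groups cut out a code `D ⊇ C` of dimension `n - l = rn/(r+1)`:
the words whose sum over every group vanishes. Choosing in each group `j` a subset of even size
`2 iⱼ` with `∑ iⱼ ≤ t = ⌊(d-1)/4⌋` gives a word of `D` of weight `≤ 2t`, and distinct choices give
distinct words. Two such words differ by a vector of weight `≤ 4t < d`, so they lie in different
cosets of `C`; these cosets all sit inside `D`, whence `|C| · #choices ≤ |D|`.
-/

open Finset Function

theorem AddSubgroup.natCard_mul_card_le_of_incongruent {G α : Type*} [AddCommGroup G]
    {C D : AddSubgroup G} [Finite D] (hCD : C ≤ D) {s : Finset α} (f : α → G)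
    (hfD : ∀ a ∈ s, f a ∈ D)
    (hsep : ∀ a ∈ s, ∀ b ∈ s, f a - f b ∈ C → a = b) :
    Nat.card C * s.card ≤ Nat.card D := by
  let φ : C × s → D := fun p => ⟨p.1 + f p.2, D.add_mem (hCD p.1.2) (hfD _ p.2.2)⟩
  have hφ : Injective φ := by
    rintro ⟨c, a⟩ ⟨c', b⟩ h
    have hval : (c : G) + f a = c' + f b := congrArg Subtype.val h
    have hab : a = b := Subtype.ext <| hsep _ a.2 _ b.2 <| by
      rw [show f a - f b = c' - c by rw [sub_eq_sub_iff_add_eq_add, add_comm, hval]]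
      exact C.sub_mem c'.2 c.2
    subst hab
    simpa using hval
  simpa using Nat.card_le_card_of_injective φ hφ

theorem eq_of_sub_mem_of_hammingNorm_add_le {ι β : Type*} [Fintype ι] [AddCommGroup β]
    [DecidableEq β] {C : AddSubgroup (ι → β)} {d : ℕ}
    (hC : ∀ c ∈ C, c ≠ 0 → d ≤ hammingNorm c) {u v : ι → β}
    (huv : hammingNorm u + hammingNorm v ≤ d - 1) (hsub : u - v ∈ C) : u = v := by
  by_contra hne
  have hpos : 0 < hammingNorm (u - v) := hammingNorm_pos_iff.2 (sub_ne_zero.2 hne)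
  have htri : hammingNorm (u - v) ≤ hammingNorm u + hammingNorm v := by
    have := hammingDist_triangle v 0 u
    rw [hammingDist_zero_right, hammingDist_zero_left, hammingDist_eq_hammingNorm,
      neg_add_eq_sub] at this
    omega
  have := hC _ hsub (sub_ne_zero.2 hne)
  omega

section BlockSum

variable {K ι κ : Type*}

def blockSum (K : Type*) [CommSemiring K] (G : κ → Finset ι) : (ι → K) →ₗ[K] κ → K :=
  LinearMap.pi fun j => ∑ i ∈ G j, LinearMap.proj i

@[simp]
theorem blockSum_apply [CommSemiring K] (G : κ → Finset ι) (w : ι → K) (j : κ) :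
    blockSum K G w j = ∑ i ∈ G j, w i := by
  simp [blockSum]

theorem blockSum_surjective [Fintype κ] [CommSemiring K] {G : κ → Finset ι}
    (hG : Pairwise (Disjoint on G)) (hne : ∀ j, (G j).Nonempty) : Surjective (blockSum K G) := by
  classical
  choose p hp using hne
  have hpG : ∀ j j', p j' ∈ G j ↔ j' = j := fun j j' =>
    ⟨fun h => by_contra fun hj => disjoint_left.1 (hG hj) (hp j') h, fun h => h ▸ hp j'⟩
  intro u
  refine ⟨∑ j, Pi.single (p j) (u j), funext fun j => ?_⟩
  simp only [blockSum_apply, Finset.sum_apply, Pi.single_apply]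
  rw [Finset.sum_comm]
  simp [Finset.sum_ite_eq', hpG]

theorem finrank_ker_blockSum [Fintype ι] [Fintype κ] [Field K] {G : κ → Finset ι}
    (hG : Pairwise (Disjoint on G)) (hne : ∀ j, (G j).Nonempty) :
    Module.finrank K (LinearMap.ker (blockSum K G)) = Fintype.card ι - Fintype.card κ := by
  have := LinearMap.finrank_range_add_finrank_ker (blockSum K G)
  rw [LinearMap.range_eq_top.2 (blockSum_surjective hG hne), finrank_top,
    Module.finrank_fintype_fun_eq_card, Module.finrank_fintype_fun_eq_card] at this
  omega

end BlockSum

section Vectors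

variable {K ι κ : Type*}

theorem hammingNorm_ite_mem [DecidableEq ι] [Fintype ι] [Zero K] [One K] [NeZero (1 : K)]
    [DecidableEq K] (U : Finset ι) :
    hammingNorm (fun i => if i ∈ U then (1 : K) else 0) = U.card := by
  unfold hammingNorm
  congr 1
  ext i
  by_cases hi : i ∈ U <;> simp [hi]

theorem ite_mem_injective [DecidableEq ι] [Zero K] [One K] [NeZero (1 : K)] :
    Injective fun (U : Finset ι) (i : ι) => if i ∈ U then (1 : K) else 0 := by
  intro U U' h
  ext i
  have := congrFun h i
  by_cases hi : i ∈ U <;> by_cases hi' : i ∈ U' <;> simp_all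

theorem sum_ite_mem_one [DecidableEq ι] [AddCommMonoidWithOne K] (s U : Finset ι) :
    ∑ i ∈ s, (if i ∈ U then (1 : K) else 0) = (s ∩ U).card := by
  rw [sum_boole, filter_mem_eq_inter]

theorem sum_mul_eq_sum_filter_ne_zero [Fintype ι] (a c : ι → ZMod 2) :
    ∑ i, a i * c i = ∑ i ∈ univ.filter (a · ≠ 0), c i := by
  rw [sum_filter]
  refine sum_congr rfl fun i _ => ?_
  generalize a i = x
  generalize c i = y
  revert x y
  decide

theorem inter_biUnion_eq [DecidableEq ι] [Fintype κ] {G S : κ → Finset ι}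
    (hG : Pairwise (Disjoint on G)) (hS : ∀ j, S j ⊆ G j) (j : κ) :
    G j ∩ univ.biUnion S = S j := by
  ext i
  simp only [mem_inter, mem_biUnion, mem_univ, true_and]
  refine ⟨fun ⟨hi, j', hj'⟩ => ?_, fun hi => ⟨hS j hi, j, hi⟩⟩
  obtain rfl : j' = j := by_contra fun hne => disjoint_left.1 (hG hne) (hS j' hj') hi
  exact hj'

end Vectors

section EvenSubfamilies

variable {ι κ : Type*} [Fintype κ] [DecidableEq κ]

def evenSubfamilies (G : κ → Finset ι) (t : ℕ) : Finset (Σ _ : κ → ℕ, κ → Finset ι) :=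
  ((Fintype.piFinset fun _ => range (t + 1)).filter fun x => ∑ j, x j ≤ t).sigma
    fun x => Fintype.piFinset fun j => (G j).powersetCard (2 * x j)

theorem mem_evenSubfamilies {G : κ → Finset ι} {t : ℕ} {a : Σ _ : κ → ℕ, κ → Finset ι} :
    a ∈ evenSubfamilies G t ↔
      ∑ j, a.1 j ≤ t ∧ ∀ j, a.2 j ⊆ G j ∧ (a.2 j).card = 2 * a.1 j := by
  simp only [evenSubfamilies, mem_sigma, mem_filter, Fintype.mem_piFinset, mem_range,
    mem_powersetCard]
  refine ⟨fun ⟨⟨_, ht⟩, hS⟩ => ⟨ht, hS⟩, fun ⟨ht, hS⟩ => ⟨⟨fun j => ?_, ht⟩, hS⟩⟩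
  have := single_le_sum (fun j _ => Nat.zero_le (a.1 j)) (mem_univ j)
  omega

theorem card_evenSubfamilies (G : κ → Finset ι) (t : ℕ) :
    (evenSubfamilies G t).card =
      ∑ x ∈ (Fintype.piFinset fun _ : κ => range (t + 1)).filter (fun x => ∑ j, x j ≤ t),
        ∏ j, (G j).card.choose (2 * x j) := by
  simp [evenSubfamilies, card_sigma, Fintype.card_piFinset, card_powersetCard]

variable {G : κ → Finset ι} {t : ℕ} {a : Σ _ : κ → ℕ, κ → Finset ι}

theorem card_biUnion_le_of_mem_evenSubfamilies [DecidableEq ι] (ha : a ∈ evenSubfamilies G t) :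
    (univ.biUnion a.2).card ≤ 2 * t := by
  obtain ⟨ht, hS⟩ := mem_evenSubfamilies.1 ha
  calc (univ.biUnion a.2).card ≤ ∑ j, (a.2 j).card := card_biUnion_le
    _ = 2 * ∑ j, a.1 j := by rw [mul_sum]; exact sum_congr rfl fun j _ => (hS j).2
    _ ≤ 2 * t := by omega

theorem blockSum_ite_mem_biUnion_eq_zero [DecidableEq ι] {K : Type*} [CommRing K] [CharP K 2]
    (hG : Pairwise (Disjoint on G)) (ha : a ∈ evenSubfamilies G t) :
    blockSum K G (fun i => if i ∈ univ.biUnion a.2 then 1 else 0) = 0 := by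
  obtain ⟨-, hS⟩ := mem_evenSubfamilies.1 ha
  ext j
  rw [blockSum_apply, sum_ite_mem_one, inter_biUnion_eq hG (fun j => (hS j).1), (hS j).2]
  simp [CharTwo.two_eq_zero]

theorem injOn_biUnion_evenSubfamilies [DecidableEq ι] (hG : Pairwise (Disjoint on G)) :
    Set.InjOn (fun a : Σ _ : κ → ℕ, κ → Finset ι => univ.biUnion a.2) (evenSubfamilies G t) := by
  intro a ha b hb hab
  obtain ⟨-, hSa⟩ := mem_evenSubfamilies.1 ha
  obtain ⟨-, hSb⟩ := mem_evenSubfamilies.1 hb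
  have hS : a.2 = b.2 := funext fun j => by
    rw [← inter_biUnion_eq hG (fun j => (hSa j).1), ← inter_biUnion_eq hG (fun j => (hSb j).1)]
    exact congrArg (G j ∩ ·) hab
  have hx : a.1 = b.1 := funext fun j => by
    have := (hSa j).2
    rw [hS, (hSb j).2] at this
    omega
  exact Sigma.ext hx (heq_of_eq hS)

theorem eq_of_sub_mem_of_mem_evenSubfamilies [DecidableEq ι] [Fintype ι] {K : Type*}
    [AddCommGroupWithOne K] [NeZero (1 : K)] [DecidableEq K] {C : AddSubgroup (ι → K)} {d : ℕ}
    (hC : ∀ c ∈ C, c ≠ 0 → d ≤ hammingNorm c) (hG : Pairwise (Disjoint on G))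
    (htd : 4 * t ≤ d - 1) {b : Σ _ : κ → ℕ, κ → Finset ι} (ha : a ∈ evenSubfamilies G t)
    (hb : b ∈ evenSubfamilies G t)
    (hab : (fun i => if i ∈ univ.biUnion a.2 then (1 : K) else 0) -
      (fun i => if i ∈ univ.biUnion b.2 then 1 else 0) ∈ C) : a = b := by
  refine injOn_biUnion_evenSubfamilies hG ha hb (ite_mem_injective (K := K) ?_)
  refine eq_of_sub_mem_of_hammingNorm_add_le hC ?_ hab
  have := card_biUnion_le_of_mem_evenSubfamilies ha
  have := card_biUnion_le_of_mem_evenSubfamilies hb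
  simp only [hammingNorm_ite_mem]
  omega

end EvenSubfamilies

theorem stmt_3_general (n k d r l : ℕ)
    (C : Submodule (ZMod 2) (Fin n → ZMod 2))
    (hk : Module.finrank (ZMod 2) C = k)
    (hdist : ∀ c ∈ C, c ≠ 0 → d ≤ hammingNorm c)
    (h : Fin l → (Fin n → ZMod 2))
    (hdual : ∀ j, ∀ c ∈ C, ∑ i, h j i * c i = 0)
    (hwt : ∀ j, hammingNorm (h j) = r + 1)
    (hdisj : ∀ j j', j ≠ j' → ∀ i, h j i = 0 ∨ h j' i = 0)
    (hn : n = l * (r + 1)) :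
    2 ^ k *
      (∑ x ∈ Finset.filter (fun x => ∑ j, x j ≤ (d - 1) / 4)
          (Fintype.piFinset fun _ : Fin l => Finset.range ((d - 1) / 4 + 1)),
        ∏ j, Nat.choose (r + 1) (2 * x j)) ≤
    2 ^ (r * n / (r + 1)) := by
  set t := (d - 1) / 4
  set G : Fin l → Finset (Fin n) := fun j => univ.filter (h j · ≠ 0)
  have hGcard : ∀ j, (G j).card = r + 1 := hwt
  have hGdisj : Pairwise (Disjoint on G) := fun j j' hjj' => disjoint_left.2 fun i hi hi' => by
    simp only [G, mem_filter] at hi hi'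
    exact (hdisj j j' hjj' i).elim hi.2 hi'.2
  have hGne : ∀ j, (G j).Nonempty := fun j => card_pos.1 (by rw [hGcard]; omega)
  let D := LinearMap.ker (blockSum (ZMod 2) G)
  have hCD : C ≤ D := fun c hc => funext fun j => by
    simpa [D, sum_mul_eq_sum_filter_ne_zero] using hdual j c hc
  let v : (Σ _ : Fin l → ℕ, Fin l → Finset (Fin n)) → Fin n → ZMod 2 :=
    fun a i => if i ∈ univ.biUnion a.2 then 1 else 0
  have key := AddSubgroup.natCard_mul_card_le_of_incongruent (C := C.toAddSubgroup)
    (D := D.toAddSubgroup) (s := evenSubfamilies G t) hCD v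
    (fun a ha => blockSum_ite_mem_biUnion_eq_zero hGdisj ha)
    fun a ha b hb =>
      eq_of_sub_mem_of_mem_evenSubfamilies (C := C.toAddSubgroup) hdist hGdisj (by omega) ha hb
  have hCcard : Nat.card C = 2 ^ k := by
    rw [Module.natCard_eq_pow_finrank (K := ZMod 2), hk, Nat.card_zmod]
  have hDcard : Nat.card D = 2 ^ (r * n / (r + 1)) := by
    rw [Module.natCard_eq_pow_finrank (K := ZMod 2), finrank_ker_blockSum hGdisj hGne,
      Nat.card_zmod, Fintype.card_fin, Fintype.card_fin, hn, ← mul_assoc,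
      Nat.mul_div_cancel _ r.succ_pos, mul_add, mul_one, Nat.add_sub_cancel, mul_comm]
  rw [card_evenSubfamilies] at key
  simp only [hGcard] at key
  exact hCcard ▸ hDcard ▸ key

/-- Corollary 1 of the paper: for a binary `[n,k,d]` LRC with disjoint local repair
groups of locality `r` (so `n = l(r+1)`),
`2^k · Σ_{i₁+⋯+i_l ≤ ⌊(d−1)/4⌋} Π_j C(r+1, 2i_j) ≤ 2^{rn/(r+1)}`. -/
theorem stmt_3 (n k d r l : ℕ)
    (C : Submodule (ZMod 2) (Fin n → ZMod 2))
    (hk : Module.finrank (ZMod 2) C = k)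
    (hdist : ∀ c ∈ C, c ≠ 0 → d ≤ hammingNorm c)
    (h : Fin l → (Fin n → ZMod 2))
    (hdual : ∀ j, ∀ c ∈ C, ∑ i, h j i * c i = 0)
    (hwt : ∀ j, hammingNorm (h j) = r + 1)
    (hdisj : ∀ j j', j ≠ j' → ∀ i, h j i = 0 ∨ h j' i = 0)
    (hcover : ∀ i : Fin n, ∃ j, h j i ≠ 0)
    (hn : n = l * (r + 1)) :
    2 ^ k *
      (∑ x ∈ Finset.filter (fun x => ∑ j, x j ≤ (d - 1) / 4)
          (Fintype.piFinset fun _ : Fin l => Finset.range ((d - 1) / 4 + 1)),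
        ∏ j, Nat.choose (r + 1) (2 * x j)) ≤
    2 ^ (r * n / (r + 1)) :=
  stmt_3_general n k d r l C hk hdist h hdual hwt hdisj hn
end

section
/- Let n and r be real numbers with r ≥ 2 and n ≥ 2(r+2). Define f(l) = l + log₂( 1 + (2n − l(r+1))(2n − l(r+2))/(2l) ). Then for every real l with n/(r+1) ≤ l ≤ 2n/(r+2), f(l) ≥ n/(r+1) + min{ log₂(1 + rn/2), rn/((r+1)(r+2)) }. -/
/-!
Write `f l = l + log₂ h l` with `h l = 2n²/l + (1 - n(2r+3)) + (r+1)(r+2) l / 2`. The logarithm of `h`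
is concave wherever `h h'' ≤ h'²`; after clearing denominators and putting `u = l(r+1)`,
`w = l(r+2)`, this becomes `16n²(w - u) ≤ u²w² - 16n²(u-n)(w-n)`, which holds because
`n ≤ u < w ≤ 2n` on the interval and `n (w - u) = n l ≥ 2(r+2) l = 2w`. So `f` is concave and its
minimum on the interval is at an endpoint, where `h = 1 + rn/2` and `h = 1` respectively.
-/

open Set

theorem concaveOn_log_comp_of_mul_deriv2_le_sq {D : Set ℝ} (hD : Convex ℝ D) {h h' h'' : ℝ → ℝ}
    (hcont : ContinuousOn h D) (hpos : ∀ x ∈ D, 0 < h x)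
    (hh' : ∀ x ∈ interior D, HasDerivAt h (h' x) x)
    (hh'' : ∀ x ∈ interior D, HasDerivAt h' (h'' x) x)
    (hle : ∀ x ∈ interior D, h x * h'' x ≤ h' x ^ 2) :
    ConcaveOn ℝ D fun x => Real.log (h x) := by
  have hne : ∀ x ∈ interior D, h x ≠ 0 := fun x hx => (hpos x (interior_subset hx)).ne'
  refine concaveOn_of_hasDerivWithinAt2_nonpos (f' := fun x => h' x / h x)
    (f'' := fun x => (h'' x * h x - h' x * h' x) / h x ^ 2) hD
    (hcont.log fun x hx => (hpos x hx).ne')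
    (fun x hx => ((hh' x hx).log (hne x hx)).hasDerivWithinAt)
    (fun x hx => ((hh'' x hx).div (hh' x hx) (hne x hx)).hasDerivWithinAt) fun x hx => ?_
  exact div_nonpos_of_nonpos_of_nonneg (by nlinarith [hle x hx]) (sq_nonneg _)

theorem concaveOn_log_inv_add_mul {A B C : ℝ} {D : Set ℝ} (hD : Convex ℝ D) (hD₀ : D ⊆ Ioi 0)
    (hpos : ∀ x ∈ D, 0 < A * x⁻¹ + B + C * x)
    (hdisc : ∀ x ∈ D, 2 * A * (A + B * x + C * x ^ 2) ≤ (C * x ^ 2 - A) ^ 2) :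
    ConcaveOn ℝ D fun x => Real.log (A * x⁻¹ + B + C * x) := by
  have hh' (x : ℝ) (hx : 0 < x) :
      HasDerivAt (fun x => A * x⁻¹ + B + C * x) (C - A / x ^ 2) x :=
    ((((hasDerivAt_inv hx.ne').const_mul A).add_const B).add
      ((hasDerivAt_id x).const_mul C)).congr_deriv (by ring)
  have hh'' (x : ℝ) (hx : 0 < x) : HasDerivAt (fun x => C - A / x ^ 2) (2 * A / x ^ 3) x :=
    (((hasDerivAt_const x A).div (hasDerivAt_pow 2 x) (by positivity)).const_sub C).congr_deriv
      (by field_simp; ring)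
  refine concaveOn_log_comp_of_mul_deriv2_le_sq hD
    (fun x hx => (hh' x (hD₀ hx)).continuousAt.continuousWithinAt) hpos
    (fun x hx => hh' x (hD₀ (interior_subset hx))) (fun x hx => hh'' x (hD₀ (interior_subset hx)))
    fun x hx => ?_
  have hx₀ : 0 < x := hD₀ (interior_subset hx)
  calc (A * x⁻¹ + B + C * x) * (2 * A / x ^ 3) = 2 * A * (A + B * x + C * x ^ 2) / x ^ 4 := by
        field_simp
    _ ≤ (C * x ^ 2 - A) ^ 2 / x ^ 4 := by gcongr; exact hdisc x (interior_subset hx)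
    _ = (C - A / x ^ 2) ^ 2 := by field_simp

theorem cube_mul_sq_sub_le {n u w : ℝ} (hnu : n ≤ u) (huw : u ≤ w) (hw : w ≤ 2 * n) :
    8 * n ^ 3 * (w - u) ^ 2 ≤ w * (u ^ 2 * w ^ 2 - 16 * n ^ 2 * (u - n) * (w - n)) := by
  obtain ⟨α, rfl⟩ : ∃ α, u = 2 * n - α := ⟨2 * n - u, by ring⟩
  obtain ⟨β, rfl⟩ : ∃ β, w = 2 * n - β := ⟨2 * n - w, by ring⟩
  have hβ : 0 ≤ β := by linarith
  have hβα : 0 ≤ α - β := by linarith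
  have hαn : 0 ≤ n - α := by linarith
  have hα : 0 ≤ α := by linarith
  have hG : 0 ≤ α * (α - β) * (2 * n ^ 2 + 10 * n * (n - α) + α ^ 2)
      + α * (n - α) * (2 * (2 * n - α) ^ 2 + 8 * n ^ 2) + α ^ 4 + (α - β) * β * (2 * n - α) ^ 2 := by
    have hn : 0 ≤ n := by linarith
    positivity
  -- the difference of the two sides is `β` times the sum in `hG`
  nlinarith [mul_nonneg hβ hG]

theorem sixteen_sq_mul_sub_le {n u w : ℝ} (hnu : n ≤ u) (huw : u < w) (hw : w ≤ 2 * n)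
    (hgap : 2 * w ≤ n * (w - u)) :
    16 * n ^ 2 * (w - u) ≤ u ^ 2 * w ^ 2 - 16 * n ^ 2 * (u - n) * (w - n) := by
  have hE : 0 ≤ u ^ 2 * w ^ 2 - 16 * n ^ 2 * (u - n) * (w - n) := by
    nlinarith [sq_nonneg (u * (2 * n - w)), mul_nonneg (mul_nonneg (by linarith : 0 ≤ n)
      (by linarith : 0 ≤ w - n)) (sq_nonneg (2 * n - u))]
  have hnwu : 0 < n * (w - u) := by nlinarith
  refine le_of_mul_le_mul_left ?_ hnwu
  nlinarith [cube_mul_sq_sub_le hnu huw.le hw, mul_le_mul_of_nonneg_right hgap hE]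

section

variable {n r : ℝ}

theorem le_mul_and_mul_le_of_mem_Icc (hr : -1 < r) {x : ℝ}
    (hx : x ∈ Icc (n / (r + 1)) (2 * n / (r + 2))) : n ≤ x * (r + 1) ∧ x * (r + 2) ≤ 2 * n :=
  ⟨(div_le_iff₀ (by linarith)).1 hx.1, (le_div_iff₀ (by linarith)).1 hx.2⟩

theorem concaveOn_add_logb (hr : -1 < r) (hn : 2 * (r + 2) ≤ n) :
    ConcaveOn ℝ (Icc (n / (r + 1)) (2 * n / (r + 2))) fun l =>
      l + Real.logb 2 (1 + (2 * n - l * (r + 1)) * (2 * n - l * (r + 2)) / (2 * l)) := by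
  have hpos : Icc (n / (r + 1)) (2 * n / (r + 2)) ⊆ Ioi 0 := fun x hx =>
    (div_pos (by linarith) (by linarith)).trans_le hx.1
  have hform (x : ℝ) (hx : x ≠ 0) : 1 + (2 * n - x * (r + 1)) * (2 * n - x * (r + 2)) / (2 * x) =
      2 * n ^ 2 * x⁻¹ + (1 - n * (2 * r + 3)) + (r + 1) * (r + 2) / 2 * x := by
    field_simp; ring
  have hlog := concaveOn_log_inv_add_mul (A := 2 * n ^ 2) (B := 1 - n * (2 * r + 3))
    (C := (r + 1) * (r + 2) / 2) (convex_Icc _ _) hpos (fun x hx => ?_) fun x hx => ?_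
  · refine ((concaveOn_id (convex_Icc _ _)).add
      (hlog.smul (inv_nonneg.2 (Real.log_nonneg one_le_two)))).congr fun x hx => ?_
    simp only [Pi.add_apply, id, smul_eq_mul, Real.logb, hform x (hpos hx).ne']
    ring
  · obtain ⟨hu, hw⟩ := le_mul_and_mul_le_of_mem_Icc hr hx
    have hx₀ : 0 < x := hpos hx
    rw [← hform x hx₀.ne']
    have : 0 ≤ (2 * n - x * (r + 1)) * (2 * n - x * (r + 2)) / (2 * x) :=
      div_nonneg (mul_nonneg (by nlinarith) (by linarith)) (by linarith)
    linarith
  · obtain ⟨hu, hw⟩ := le_mul_and_mul_le_of_mem_Icc hr hx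
    have hx₀ : 0 < x := hpos hx
    have hgap := sixteen_sq_mul_sub_le hu (by nlinarith) hw (by nlinarith)
    linear_combination hgap / 4

end

/-- The key claim in the proof of Theorem 3 of the paper: for real `r ≥ 2` and
`n ≥ 2(r+2)`, the function `f(l) = l + log₂(1 + (2n − l(r+1))(2n − l(r+2))/(2l))`
satisfies `f(l) ≥ n/(r+1) + min{ log₂(1 + rn/2), rn/((r+1)(r+2)) }` for every
`l ∈ [n/(r+1), 2n/(r+2)]`. -/
theorem stmt_10 (n r : ℝ) (hr : 2 ≤ r) (hn : 2 * (r + 2) ≤ n) :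
    ∀ l ∈ Set.Icc (n / (r + 1)) (2 * n / (r + 2)),
      n / (r + 1) + min (Real.logb 2 (1 + r * n / 2)) (r * n / ((r + 1) * (r + 2))) ≤
        l + Real.logb 2 (1 + (2 * n - l * (r + 1)) * (2 * n - l * (r + 2)) / (2 * l)) := by
  intro l hl
  have hr₁ : 0 < r + 1 := by linarith
  have hr₂ : 0 < r + 2 := by linarith
  have hab : n / (r + 1) ≤ 2 * n / (r + 2) := by
    rw [div_le_div_iff₀ hr₁ hr₂]; nlinarith
  have hmin := (concaveOn_add_logb (by linarith) hn).min_le_of_mem_Icc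
    (left_mem_Icc.2 hab) (right_mem_Icc.2 hab) hl
  have hleft : 1 + (2 * n - n / (r + 1) * (r + 1)) * (2 * n - n / (r + 1) * (r + 2)) /
      (2 * (n / (r + 1))) = 1 + r * n / 2 := by
    field_simp; ring
  have hright : 2 * n / (r + 2) = n / (r + 1) + r * n / ((r + 1) * (r + 2)) := by
    field_simp; ring
  simp only [hleft, div_mul_cancel₀ _ hr₂.ne', sub_self, mul_zero, zero_div, add_zero,
    Real.logb_one] at hmin
  rwa [hright, min_add_add_left] at hmin
end

section
/- Let t ≥ 1 and m ≥ 1 be integers, let F = 𝔽_{2^{2t}} be the field with 2^{2t} elements, let a₁,…,a_{2^t} ∈ F be such that any subset of at most 4 of the aⱼ is linearly independent over 𝔽₂, and let β₁,…,β_l ∈ F^m be nonzero vectors that are pairwise linearly independent over F. Set n = l(2^t + 1), and let C ⊆ 𝔽₂ⁿ be the set of vectors c = (c_{i,j})_{1 ≤ i ≤ l, 0 ≤ j ≤ 2^t} satisfying: (a) Σ_{j=0}^{2^t} c_{i,j} = 0 in 𝔽₂ for every i ∈ {1,…,l}, and (b) Σ_{i=1}^{l} ( Σ_{j=1}^{2^t}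 c_{i,j} aⱼ ) βᵢ = 0 in F^m. Then C is a linear subspace of 𝔽₂ⁿ of dimension at least n − l − 2tm, C has locality 2^t, and every nonzero vector of C has Hamming weight at least 6. -/
/-!
A codeword of weight at most 5 has even weight in every block by the checks (a), so at most two
blocks are nonzero and each of them has weight at most 4. A nonzero block of weight at most 4 has
nonzero syndrome `Σ_j c_{i,j} a_j`: otherwise its last `2^t` coordinates vanish by the 4-wise
independence of the `a_j`, and then so does the first one by (a). Check (b) is then a relation
with nonzero coefficients among at most two of the `β_i`, contradicting their pairwise
independence. The dimension bound is rank–nullity for the parity-check map, and the locality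
comes from the block checks (a).
-/

open Finset Function Module

section Hamming

variable {ι κ γ : Type*} [Fintype ι] [Fintype κ] [Zero γ] [DecidableEq γ]

theorem hammingNorm_eq_sum_hammingNorm_curry (c : ι × κ → γ) :
    hammingNorm c = ∑ i, hammingNorm (curry c i) := by
  rw [hammingNorm, card_filter, Fintype.sum_prod_type]
  exact sum_congr rfl fun i _ => (card_filter _ _).symm

theorem hammingNorm_curry_apply_le (c : ι × κ → γ) (i : ι) :
    hammingNorm (curry c i) ≤ hammingNorm c := by
  rw [hammingNorm_eq_sum_hammingNorm_curry c]
  exact single_le_sum (f := fun i => hammingNorm (curry c i)) (fun _ _ => Nat.zero_le _)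
    (mem_univ i)

theorem hammingNorm_tail_le {n : ℕ} (x : Fin (n + 1) → γ) :
    hammingNorm (Fin.tail x) ≤ hammingNorm x :=
  card_le_card_of_injOn Fin.succ (fun i hi => by simpa [Fin.tail] using (mem_filter.mp hi).2)
    (Fin.succ_injective _).injOn

theorem two_mul_hammingNorm_curry_le (c : ι × κ → γ)
    (heven : ∀ i, Even (hammingNorm (curry c i))) :
    2 * hammingNorm (curry c) ≤ hammingNorm c :=
  calc 2 * hammingNorm (curry c) = ∑ i with curry c i ≠ 0, 2 := by
        rw [sum_const, smul_eq_mul, mul_comm, hammingNorm]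
    _ ≤ ∑ i with curry c i ≠ 0, hammingNorm (curry c i) := by
        refine sum_le_sum fun i hi => ?_
        have hpos := hammingNorm_pos_iff.mpr (mem_filter.mp hi).2
        obtain ⟨r, hr⟩ := heven i
        omega
    _ ≤ ∑ i, hammingNorm (curry c i) := sum_le_sum_of_subset (filter_subset _ _)
    _ = hammingNorm c := (hammingNorm_eq_sum_hammingNorm_curry c).symm

theorem sum_eq_hammingNorm_cast (x : ι → ZMod 2) : ∑ i, x i = hammingNorm x := by
  have hone : ∀ z : ZMod 2, z ≠ 0 → z = 1 := by decide
  rw [← sum_filter_ne_zero, sum_congr rfl fun i hi => hone _ (mem_filter.mp hi).2]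
  simp [hammingNorm]

theorem even_hammingNorm_of_sum_eq_zero {x : ι → ZMod 2} (h : ∑ i, x i = 0) :
    Even (hammingNorm x) := by
  rwa [← ZMod.natCast_eq_zero_iff_even, ← sum_eq_hammingNorm_cast]

end Hamming

theorem eq_zero_of_sum_smul_eq_zero_of_hammingNorm_le {κ R M : Type*} [Fintype κ]
    [Ring R] [DecidableEq R] [AddCommGroup M] [Module R M] {v : κ → M} {d : ℕ}
    (hv : ∀ S : Finset κ, S.card ≤ d → LinearIndepOn R v S) {y : κ → R}
    (hy : hammingNorm y ≤ d) (h : ∑ j, y j • v j = 0) : y = 0 := by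
  have hS := linearIndepOn_finset_iff.mp (hv _ hy) y
  rw [sum_filter_of_ne fun j _ hj => left_ne_zero_of_smul hj] at hS
  funext j
  by_contra hj
  exact hj (hS h j (by simpa using hj))

theorem linearIndepOn_of_card_le_two {ι K M : Type*} [DivisionRing K] [AddCommGroup M]
    [Module K M] {β : ι → M} (hβ0 : ∀ i, β i ≠ 0)
    (hβ : ∀ i i', i ≠ i' → LinearIndependent K ![β i, β i']) (S : Finset ι) (hS : S.card ≤ 2) :
    LinearIndepOn K β S := by
  classical
  obtain hS | hS | hS : S.card = 0 ∨ S.card = 1 ∨ S.card = 2 := by omega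
  · simp [card_eq_zero.mp hS]
  · obtain ⟨i, rfl⟩ := card_eq_one.mp hS
    rw [coe_singleton]
    exact (linearIndepOn_singleton_iff K).mpr (hβ0 i)
  · obtain ⟨i, i', hii', rfl⟩ := card_eq_two.mp hS
    rw [coe_pair, LinearIndepOn.pair_iff β hii']
    exact LinearIndependent.pair_iff.mp (hβ i i' hii')

theorem LinearMap.finrank_sub_finrank_le_finrank_ker {K V W : Type*} [DivisionRing K]
    [AddCommGroup V] [Module K V] [AddCommGroup W] [Module K W] [FiniteDimensional K V]
    [FiniteDimensional K W] (f : V →ₗ[K] W) :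
    (finrank K V : ℤ) - finrank K W ≤ finrank K (LinearMap.ker f) := by
  have hrank := f.finrank_range_add_finrank_ker
  have hrange := (LinearMap.range f).finrank_le
  omega

section BlockCode

variable {ι M V F : Type*} [Fintype ι] {k : ℕ}

-- Coordinate `0` of a block is its parity coordinate; coordinate `j.succ` carries `a j`.
def blockSyndrome [AddCommGroup M] [Module (ZMod 2) M] (a : Fin k → M)
    (x : Fin (k + 1) → ZMod 2) : M :=
  ∑ j, x j.succ • a j

theorem blockSyndrome_zero [AddCommGroup M] [Module (ZMod 2) M] (a : Fin k → M) :
    blockSyndrome a 0 = 0 := by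
  simp [blockSyndrome]

theorem blockSyndrome_ne_zero [AddCommGroup M] [Module (ZMod 2) M] {a : Fin k → M}
    (ha : ∀ S : Finset (Fin k), S.card ≤ 4 → LinearIndepOn (ZMod 2) a S)
    {x : Fin (k + 1) → ZMod 2} (hsum : ∑ j, x j = 0) (hx : hammingNorm x ≤ 5) (hx0 : x ≠ 0) :
    blockSyndrome a x ≠ 0 := by
  intro hsyn
  obtain ⟨r, hr⟩ := even_hammingNorm_of_sum_eq_zero hsum
  have htail : Fin.tail x = 0 :=
    eq_zero_of_sum_smul_eq_zero_of_hammingNorm_le ha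
      ((hammingNorm_tail_le x).trans (by omega)) hsyn
  have hhead : x 0 = 0 := by
    simpa [Fin.sum_univ_succ, ← Fin.tail_def, htail] using hsum
  refine hx0 (funext fun j => Fin.cases ?_ (fun j => ?_) j)
  exacts [hhead, congrFun htail j]

variable [Ring F] [Algebra (ZMod 2) F] [AddCommGroup V] [Module F V] [Module (ZMod 2) V]
  [IsScalarTower (ZMod 2) F V]

def blockSums : (ι × Fin (k + 1) → ZMod 2) →ₗ[ZMod 2] (ι → ZMod 2) where
  toFun c i := ∑ j, c (i, j)
  map_add' x y := by ext i; simp [sum_add_distrib]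
  map_smul' r x := by ext i; simp [mul_sum]

def syndrome (a : Fin k → F) (β : ι → V) : (ι × Fin (k + 1) → ZMod 2) →ₗ[ZMod 2] V where
  toFun c := ∑ i, blockSyndrome a (curry c i) • β i
  map_add' x y := by simp [blockSyndrome, add_smul, sum_add_distrib]
  map_smul' r x := by
    simp only [blockSyndrome, curry_apply, Pi.smul_apply, smul_eq_mul, mul_smul, ← smul_sum,
      smul_assoc, RingHom.id_apply]

def blockCode (a : Fin k → F) (β : ι → V) : Submodule (ZMod 2) (ι × Fin (k + 1) → ZMod 2) :=
  LinearMap.ker (blockSums.prod (syndrome a β))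

theorem mem_blockCode {a : Fin k → F} {β : ι → V} {c : ι × Fin (k + 1) → ZMod 2} :
    c ∈ blockCode a β ↔
      (∀ i, ∑ j, c (i, j) = 0) ∧ ∑ i, blockSyndrome a (curry c i) • β i = 0 := by
  rw [blockCode, LinearMap.mem_ker]
  exact Prod.mk_eq_zero.trans (and_congr funext_iff Iff.rfl)

theorem six_le_hammingNorm_of_mem_blockCode {a : Fin k → F} {β : ι → V}
    (ha : ∀ S : Finset (Fin k), S.card ≤ 4 → LinearIndepOn (ZMod 2) a S)
    (hβ : ∀ S : Finset ι, S.card ≤ 2 → LinearIndepOn F β S)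
    {c : ι × Fin (k + 1) → ZMod 2} (hc : c ∈ blockCode a β) (hc0 : c ≠ 0) :
    6 ≤ hammingNorm c := by
  classical
  by_contra! hlt
  obtain ⟨hsum, hsyn⟩ := mem_blockCode.mp hc
  have hrow (i : ι) : hammingNorm (curry c i) ≤ 5 := by
    have := hammingNorm_curry_apply_le c i
    omega
  have hrows : hammingNorm (curry c) ≤ 2 := by
    have := two_mul_hammingNorm_curry_le c fun i => even_hammingNorm_of_sum_eq_zero (hsum i)
    omega
  have hsyn0 : (fun i => blockSyndrome a (curry c i)) = 0 :=
    eq_zero_of_sum_smul_eq_zero_of_hammingNorm_le hβ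
      ((hammingNorm_comp_le_hammingNorm _ fun _ => blockSyndrome_zero a).trans hrows) hsyn
  have hcurry : curry c = 0 := funext fun i => by
    by_contra hi
    exact blockSyndrome_ne_zero ha (hsum i) (hrow i) hi (congrFun hsyn0 i)
  exact hc0 (by rw [← uncurry_curry c, hcurry]; rfl)

theorem finrank_blockCode_ge [FiniteDimensional (ZMod 2) V] (a : Fin k → F) (β : ι → V) :
    (Fintype.card ι * (k + 1) : ℤ) - Fintype.card ι - finrank (ZMod 2) V ≤
      finrank (ZMod 2) (blockCode a β) := by
  have h := (blockSums.prod (syndrome a β)).finrank_sub_finrank_le_finrank_ker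
  simp only [finrank_prod, finrank_fintype_fun_eq_card, Fintype.card_prod,
    Fintype.card_fin] at h
  push_cast at h
  rw [blockCode]
  linarith

def blockCheck [DecidableEq ι] (i : ι) : ι × Fin (k + 1) → ZMod 2 :=
  fun q => if q.1 = i then 1 else 0

theorem sum_blockCheck_mul_eq_zero [DecidableEq ι] {a : Fin k → F} {β : ι → V}
    {c : ι × Fin (k + 1) → ZMod 2} (hc : c ∈ blockCode a β) (i : ι) :
    ∑ q, blockCheck i q * c q = 0 := by
  rw [Fintype.sum_prod_type]
  simpa [blockCheck, sum_ite_irrel] using (mem_blockCode.mp hc).1 i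

theorem hammingNorm_blockCheck [DecidableEq ι] (i : ι) :
    hammingNorm (blockCheck (k := k) i) = k + 1 := by
  rw [hammingNorm_eq_sum_hammingNorm_curry]
  simp [blockCheck, curry, hammingNorm, apply_ite card]

end BlockCode

theorem stmt_13_general (t m l : ℕ) (ht : 1 ≤ t)
    (a : Fin (2 ^ t) → GaloisField 2 (2 * t))
    (ha : ∀ S : Finset (Fin (2 ^ t)), S.card ≤ 4 →
      LinearIndependent (ZMod 2) (fun j : S => a j))
    (β : Fin l → (Fin m → GaloisField 2 (2 * t)))
    (hβ0 : ∀ i, β i ≠ 0)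
    (hβ : ∀ i i', i ≠ i' → LinearIndependent (GaloisField 2 (2 * t)) ![β i, β i']) :
    ∃ W : Submodule (ZMod 2) (Fin l × Fin (2 ^ t + 1) → ZMod 2),
      (W : Set (Fin l × Fin (2 ^ t + 1) → ZMod 2)) =
        {c | (∀ i : Fin l, ∑ j, c (i, j) = 0) ∧
             ∑ i : Fin l, (∑ j : Fin (2 ^ t), c (i, j.succ) • a j) • β i = 0} ∧
      (l * (2 ^ t + 1) : ℤ) - l - 2 * t * m ≤ (Module.finrank (ZMod 2) W : ℤ) ∧
      (∀ p : Fin l × Fin (2 ^ t + 1), ∃ h : Fin l × Fin (2 ^ t + 1) → ZMod 2,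
        (∀ c ∈ W, ∑ q, h q * c q = 0) ∧ h p ≠ 0 ∧ hammingNorm h ≤ 2 ^ t + 1) ∧
      (∀ c ∈ W, c ≠ 0 → 6 ≤ hammingNorm c) := by
  refine ⟨blockCode a β, Set.ext fun c => mem_blockCode, ?_,
    fun p => ⟨blockCheck p.1, fun c hc => sum_blockCheck_mul_eq_zero hc p.1,
      by simp [blockCheck], (hammingNorm_blockCheck p.1).le⟩,
    fun c => six_le_hammingNorm_of_mem_blockCode ha (linearIndepOn_of_card_le_two hβ0 hβ)⟩
  have hF : finrank (ZMod 2) (Fin m → GaloisField 2 (2 * t)) = 2 * t * m := by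
    rw [finrank_pi_fintype, sum_const, GaloisField.finrank 2 (by omega)]
    simp [mul_comm]
  simpa [hF] using finrank_blockCode_ge a β

/-- Construction 1 / Theorem 4 of the paper (dimension, locality and distance):
given `a₁,…,a_{2^t} ∈ 𝔽_{2^{2t}}` any at most 4 of which are `𝔽₂`-linearly
independent, and pairwise `𝔽_{2^{2t}}`-linearly independent nonzero vectors
`β₁,…,β_l ∈ 𝔽_{2^{2t}}^m`, the binary code `C` of length `n = l(2^t+1)` defined by
the parity checks (a) `Σ_j c_{i,j} = 0` for each `i` and
(b) `Σ_i (Σ_{j≥1} c_{i,j} a_j) β_i = 0` is a linear subspace of dimension at least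
`n − l − 2tm`, has locality `2^t`, and has minimum Hamming weight at least `6`. -/
theorem stmt_13 (t m l : ℕ) (ht : 1 ≤ t) (hm : 1 ≤ m)
    (a : Fin (2 ^ t) → GaloisField 2 (2 * t))
    (ha : ∀ S : Finset (Fin (2 ^ t)), S.card ≤ 4 →
      LinearIndependent (ZMod 2) (fun j : S => a j))
    (β : Fin l → (Fin m → GaloisField 2 (2 * t)))
    (hβ0 : ∀ i, β i ≠ 0)
    (hβ : ∀ i i', i ≠ i' → LinearIndependent (GaloisField 2 (2 * t)) ![β i, β i']) :
    ∃ W : Submodule (ZMod 2) (Fin l × Fin (2 ^ t + 1) → ZMod 2),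
      (W : Set (Fin l × Fin (2 ^ t + 1) → ZMod 2)) =
        {c | (∀ i : Fin l, ∑ j, c (i, j) = 0) ∧
             ∑ i : Fin l, (∑ j : Fin (2 ^ t), c (i, j.succ) • a j) • β i = 0} ∧
      (l * (2 ^ t + 1) : ℤ) - l - 2 * t * m ≤ (Module.finrank (ZMod 2) W : ℤ) ∧
      (∀ p : Fin l × Fin (2 ^ t + 1), ∃ h : Fin l × Fin (2 ^ t + 1) → ZMod 2,
        (∀ c ∈ W, ∑ q, h q * c q = 0) ∧ h p ≠ 0 ∧ hammingNorm h ≤ 2 ^ t + 1) ∧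
      (∀ c ∈ W, c ≠ 0 → 6 ≤ hammingNorm c) :=
  stmt_13_general t m l ht a ha β hβ0 hβ
end

section
/- Let s and t be positive integers with 2t dividing s, s/(2t) ≥ 2, and (s,t) ≠ (4,1). Set r = 2^t and n = (2^s − 1)/(2^t − 1). Then every k-dimensional linear subspace C of 𝔽₂ⁿ whose nonzero vectors all have Hamming weight at least 5 and which has locality r satisfies k ≤ rn/(r+1) − s. -/
/-!
Put `m = (2^s - 1)/(4^t - 1)`, so that `n = m (r + 1)`. A basis `v₁, …, v_ℓ` of the span of the
local parity checks, chosen among them, still covers every coordinate, so `m ≤ ℓ`, and `C` lies in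
the common kernel of the `vⱼ`, of dimension `n - ℓ`. Write `ℓ = m + e`; if `e ≥ s` this already
gives `k ≤ mr - s`. Otherwise many coordinates are private (checked by a single `vⱼ`), and two
private coordinates of the same check form a weight-two vector of the kernel. These vectors and `0`
are pairwise at distance at most `4 < 5`, so their translates of `C` are disjoint:
`(P + 1) 2^k ≤ 2^(n - ℓ)` with `P` the number of such pairs. Counting private coordinates and
Cauchy–Schwarz give `P ≥ 2^(s - e - 1)`, whence `k ≤ mr - s`.
-/

open Finset

lemma three_mul_add_three_le_two_pow {u : ℕ} (hu : 4 ≤ u) : 3 * u + 3 ≤ 2 ^ u := by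
  induction u, hu using Nat.le_induction with
  | base => norm_num
  | succ u _ ih => rw [pow_succ]; omega

lemma pow_sub_one_div_pred_eq {a : ℕ} (ha : 2 ≤ a) (q : ℕ) :
    (a ^ (2 * q) - 1) / (a - 1) = (a ^ (2 * q) - 1) / (a ^ 2 - 1) * (a + 1) := by
  have hdvd : a ^ 2 - 1 ∣ a ^ (2 * q) - 1 := by
    simpa [pow_mul] using Nat.sub_dvd_pow_sub_pow (a ^ 2) 1 q
  have hsq : a ^ 2 - 1 = (a + 1) * (a - 1) := by
    rw [← Nat.sq_sub_sq, one_pow]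
  refine Nat.div_eq_of_eq_mul_left (by omega) ?_
  rw [mul_assoc, ← hsq, Nat.div_mul_cancel hdvd]

lemma pow_add_one_le_pow_sub_one_div {a q : ℕ} (ha : 2 ≤ a) (hq : 2 ≤ q) :
    a ^ (2 * (q - 1)) + 1 ≤ (a ^ (2 * q) - 1) / (a ^ 2 - 1) := by
  obtain ⟨q, rfl⟩ := Nat.exists_eq_add_of_le' hq
  have h2 : 2 ≤ a ^ 2 := by nlinarith
  rw [pow_mul a 2 (q + 2), ← Nat.geomSum_eq h2, Finset.sum_range_succ, pow_mul, add_comm,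
    show q + 2 - 1 = q + 1 by omega]
  gcongr
  have := Finset.single_le_sum (f := fun k => (a ^ 2) ^ k) (fun _ _ => Nat.zero_le _)
    (Finset.mem_range.mpr (show 0 < q + 1 by omega))
  rwa [pow_zero] at this

lemma add_mul_two_pow_le {t u : ℕ} (ht : 0 < t) (hu : 2 * t ≤ u) (hu4 : 4 ≤ u) :
    (u + 2 * t + 2) * (2 ^ t + 2) ≤ (2 ^ u + 1) * 2 ^ t := by
  have h3 := three_mul_add_three_le_two_pow hu4
  rcases Nat.lt_or_ge t 2 with h | h
  · obtain rfl : t = 1 := by omega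
    norm_num; omega
  · have h4 : 4 ≤ 2 ^ t := by
      calc 4 = 2 ^ 2 := by norm_num
        _ ≤ 2 ^ t := Nat.pow_le_pow_right (by norm_num) h
    nlinarith

lemma pow_le_div_mul_mul_succ {a q : ℕ} (ha : 2 ≤ a) (hq : 0 < q) :
    a ^ (2 * q) ≤ (a ^ (2 * q) - 1) / (a ^ 2 - 1) * a * (a + 1) := by
  have hdvd : a ^ 2 - 1 ∣ a ^ (2 * q) - 1 := by
    simpa [pow_mul] using Nat.sub_dvd_pow_sub_pow (a ^ 2) 1 q
  set M := (a ^ (2 * q) - 1) / (a ^ 2 - 1)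
  have hM : M * (a ^ 2 - 1) = a ^ (2 * q) - 1 := Nat.div_mul_cancel hdvd
  have h1 : 1 < a ^ (2 * q) := Nat.one_lt_pow (by omega) (by omega)
  have h2 : 1 ≤ a ^ 2 := Nat.one_le_pow _ _ (by omega)
  have hM1 : 1 ≤ M := Nat.one_le_iff_ne_zero.mpr fun h0 => by simp [h0] at hM; omega
  zify [h1.le, h2] at hM ⊢
  nlinarith

lemma exists_div_two_pow_sub_one_eq_mul {t q : ℕ} (ht : 0 < t) (hq : 2 ≤ q)
    (hne : ¬(q = 2 ∧ t = 1)) :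
    ∃ m, (2 ^ (2 * t * q) - 1) / (2 ^ t - 1) = m * (2 ^ t + 1) ∧ 8 ≤ m ∧
      (2 * t * q + 2) * (2 ^ t + 2) ≤ m * 2 ^ t ∧ 2 ^ (2 * t * q) ≤ m * 2 ^ t * (2 ^ t + 1) := by
  have hu : 4 ≤ 2 * t * (q - 1) := by
    rcases Nat.lt_or_ge t 2 with h | h
    · obtain rfl : t = 1 := by omega
      omega
    · nlinarith [Nat.mul_le_mul h (show 1 ≤ q - 1 by omega)]
  have hr : 2 ≤ 2 ^ t := Nat.one_lt_two_pow (by omega)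
  have hpow : ∀ j, 2 ^ (2 * t * j) = (2 ^ t) ^ (2 * j) := fun j => by rw [← pow_mul]; ring_nf
  have hm := pow_add_one_le_pow_sub_one_div hr hq
  rw [← hpow] at hm
  have h16 : 16 ≤ 2 ^ (2 * t * (q - 1)) :=
    (Nat.pow_le_pow_right (by norm_num) hu).trans' (by norm_num)
  have hmr := add_mul_two_pow_le ht (Nat.le_mul_of_pos_right _ (by omega)) hu
  rw [← Nat.mul_succ, show (q - 1).succ = q by omega] at hmr
  exact ⟨_, by rw [hpow]; exact pow_sub_one_div_pred_eq hr q, by omega,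
    hmr.trans (Nat.mul_le_mul_right _ hm),
    by rw [hpow]; exact pow_le_div_mul_mul_succ hr (by omega)⟩

lemma succ_mul_add_mul_succ_le {x y c z : ℕ} (hx : 3 ≤ x) (hy : 3 * c ≤ y) (hz : 8 ≤ z) :
    (x + 1) * (y + c) * (z + 1) ≤ 2 * (x * y * z) := by
  nlinarith [Nat.mul_le_mul (Nat.mul_le_mul (show 3 * (x + 1) ≤ 4 * x by omega)
    (show 3 * (y + c) ≤ 4 * y by omega)) (show 8 * (z + 1) ≤ 9 * z by omega)]

lemma add_le_of_add_mul_le {m r s : ℕ} (hmr : (s + 2) * (r + 2) ≤ m * r) : s + 3 ≤ m := by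
  nlinarith

/-- Raising `e` by one multiplies the left side by at most `9/8` and the right side by at least
`2 · (3/4)²`. -/
lemma add_mul_le_two_pow_mul {m r s : ℕ} (hm : 8 ≤ m) (hmr : (s + 2) * (r + 2) ≤ m * r) :
    ∀ e, e < s → (m + e) * (m * r) ≤ 2 ^ e * ((m - e) * (m * r - e * (r + 2))) := by
  intro e he
  induction e with
  | zero => simp
  | succ e ih =>
    have hsm := add_le_of_add_mul_le hmr
    have hY : (e + 4) * (r + 2) ≤ m * r := le_trans (Nat.mul_le_mul_right _ (by omega)) hmr
    have hY₁ : (e + 1) * (r + 2) = e * (r + 2) + (r + 2) := by ring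
    have hY₄ : (e + 4) * (r + 2) = (e + 1) * (r + 2) + 3 * (r + 2) := by ring
    have hX : m - e = m - (e + 1) + 1 := by omega
    have hY' : m * r - e * (r + 2) = m * r - (e + 1) * (r + 2) + (r + 2) := by omega
    have hstep := succ_mul_add_mul_succ_le (x := m - (e + 1)) (y := m * r - (e + 1) * (r + 2))
      (c := r + 2) (z := m + e) (by omega) (by omega) (by omega)
    rw [← hX, ← hY'] at hstep
    refine Nat.le_of_mul_le_mul_left ?_ (show 0 < m + e by omega)
    calc (m + e) * ((m + (e + 1)) * (m * r))
        = (m + e) * (m * r) * (m + e + 1) := by ring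
      _ ≤ 2 ^ e * ((m - e) * (m * r - e * (r + 2))) * (m + e + 1) :=
          Nat.mul_le_mul_right _ (ih (by omega))
      _ ≤ 2 ^ e * (2 * ((m - (e + 1)) * (m * r - (e + 1) * (r + 2)) * (m + e))) := by
          rw [mul_assoc]; exact Nat.mul_le_mul_left _ hstep
      _ = (m + e) * (2 ^ (e + 1) * ((m - (e + 1)) * (m * r - (e + 1) * (r + 2)))) := by ring

lemma sq_sum_le_card_mul_sum_choose_two {ι : Type*} (s : Finset ι) (f : ι → ℕ) :
    (∑ i ∈ s, f i) ^ 2 ≤ #s * (2 * ∑ i ∈ s, (f i).choose 2 + ∑ i ∈ s, f i) := by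
  have h : ∀ x : ℕ, 2 * x.choose 2 + x = x ^ 2 := fun x => by
    rw [Nat.choose_two_right, Nat.mul_div_cancel' (Nat.even_mul_pred_self x).two_dvd]
    cases x <;> simp; ring
  rw [Finset.mul_sum, ← Finset.sum_add_distrib, Finset.sum_congr rfl (fun i _ => h (f i))]
  exact sq_sum_le_card_mul_sum_sq

lemma two_pow_le_two_pow_mul {m r s ℓ N P : ℕ} (hm : 8 ≤ m) (hmr : (s + 2) * (r + 2) ≤ m * r)
    (hs : 2 ^ s ≤ m * r * (r + 1)) (hmℓ : m ≤ ℓ) (hℓs : ℓ < m + s)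
    (hN : 2 * (m * (r + 1)) ≤ N + ℓ * (r + 1)) (hP : N ^ 2 ≤ ℓ * (2 * P + N)) :
    2 ^ s ≤ 2 ^ (ℓ - m + 1) * P := by
  obtain ⟨e, rfl⟩ := Nat.exists_eq_add_of_le hmℓ
  have hind := add_mul_le_two_pow_mul hm hmr e (by omega)
  have hem : e ≤ m := by have := add_le_of_add_mul_le hmr; omega
  have her : e * (r + 2) ≤ m * r := le_trans (Nat.mul_le_mul_right _ (by omega)) hmr
  have hN₀ : (m - e) * (r + 1) = (m + e) + (m * r - e * (r + 2)) := by
    zify [hem, her]; ring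
  have hN₁ : (m - e) * (r + 1) + (m + e) * (r + 1) = 2 * (m * (r + 1)) := by
    zify [hem]; ring
  have hNP : N * (N - (m + e)) ≤ 2 * P * (m + e) := by
    have h1 : N * (N - (m + e)) = N ^ 2 - (m + e) * N := by rw [Nat.mul_sub, sq, mul_comm (m + e) N]
    have h2 : (m + e) * (2 * P + N) = 2 * P * (m + e) + (m + e) * N := by ring
    omega
  refine Nat.le_of_mul_le_mul_left ?_ (show 0 < m + e by omega)
  calc (m + e) * 2 ^ s ≤ (m + e) * (m * r) * (r + 1) := by
        rw [mul_assoc]; exact Nat.mul_le_mul_left _ hs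
    _ ≤ 2 ^ e * ((m - e) * (m * r - e * (r + 2))) * (r + 1) := Nat.mul_le_mul_right _ hind
    _ = 2 ^ e * (((m - e) * (r + 1)) * (m * r - e * (r + 2))) := by ring
    _ ≤ 2 ^ e * (N * (N - (m + e))) :=
        Nat.mul_le_mul_left _ (Nat.mul_le_mul (by omega) (by omega))
    _ ≤ 2 ^ e * (2 * P * (m + e)) := Nat.mul_le_mul_left _ hNP
    _ = (m + e) * (2 ^ (m + e - m + 1) * P) := by rw [Nat.add_sub_cancel_left, pow_succ]; ring

lemma add_lt_of_two_pow_le_two_pow_mul {s k e P x : ℕ} (hs : 2 ^ s ≤ 2 ^ e * P)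
    (hk : (P + 1) * 2 ^ k ≤ 2 ^ x) : s + k < e + x := by
  refine (Nat.pow_lt_pow_iff_right (by norm_num : 1 < 2)).mp ?_
  calc 2 ^ (s + k) ≤ 2 ^ e * P * 2 ^ k := by rw [pow_add]; exact Nat.mul_le_mul_right _ hs
    _ < 2 ^ e * ((P + 1) * 2 ^ k) := by
        rw [mul_assoc]; exact Nat.mul_lt_mul_of_pos_left (by simp [add_mul]) (by positivity)
    _ ≤ 2 ^ (e + x) := by rw [pow_add]; exact Nat.mul_le_mul_left _ hk

lemma exists_linearIndependent_cover {K α : Type*} [Field K] (H : Set (α → K))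
    (hH : ∀ i, ∃ h ∈ H, h i ≠ 0) :
    ∃ b ⊆ H, LinearIndependent K ((↑) : b → α → K) ∧ ∀ i, ∃ h ∈ b, h i ≠ 0 := by
  obtain ⟨b, hbH, hspan, hli⟩ := exists_linearIndependent K H
  refine ⟨b, hbH, hli, fun i => ?_⟩
  obtain ⟨h, hH, hi⟩ := hH i
  by_contra! hb
  have : Submodule.span K b ≤ LinearMap.ker (LinearMap.proj i) :=
    Submodule.span_le.mpr fun h hh => hb h hh
  exact hi (this (hspan ▸ Submodule.subset_span hH))

lemma finrank_ker_mulVecLin_of_linearIndependent {K ι α : Type*} [Field K] [Fintype ι]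
    [Fintype α] {v : ι → α → K} (hv : LinearIndependent K v) :
    Module.finrank K (LinearMap.ker (Matrix.of v).mulVecLin) = Fintype.card α - Fintype.card ι := by
  have hrank : (Matrix.of v).rank = Fintype.card ι := hv.rank_matrix
  have := LinearMap.finrank_range_add_finrank_ker (Matrix.of v).mulVecLin
  rw [Module.finrank_fintype_fun_eq_card] at this
  rw [Matrix.rank] at hrank
  omega

lemma card_mul_card_le_of_hammingDist_lt {R ι : Type*} [Ring R] [Fintype R] [DecidableEq R]
    [Fintype ι] {C W : Submodule R (ι → R)} (hCW : C ≤ W) {d : ℕ}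
    (hC : ∀ c ∈ C, c ≠ 0 → d ≤ hammingNorm c) {A : Finset (ι → R)} (hAW : ∀ x ∈ A, x ∈ W)
    (hA : ∀ x ∈ A, ∀ y ∈ A, hammingDist x y < d) : #A * Nat.card C ≤ Nat.card W := by
  have hinj : Function.Injective fun p : A × C =>
      (⟨p.1 + p.2, W.add_mem (hAW _ p.1.2) (hCW p.2.2)⟩ : W) := by
    rintro ⟨⟨x, hx⟩, ⟨c, hc⟩⟩ ⟨⟨y, hy⟩, ⟨c', hc'⟩⟩ h
    have hsum : x + c = y + c' := congrArg Subtype.val h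
    have hmem : -x + y ∈ C := by
      rw [show -x + y = c - c' by rw [neg_add_eq_sub, sub_eq_sub_iff_add_eq_add, add_comm c, hsum]]
      exact C.sub_mem hc hc'
    have : x = y := by
      by_contra hne
      have := hC _ hmem (mt neg_add_eq_zero.mp hne)
      have := hA x hx y hy
      rw [hammingDist_eq_hammingNorm] at this
      omega
    subst this
    simp_all
  simpa [Nat.card_prod] using Nat.card_le_card_of_injective _ hinj

section PrivateSupport

variable {ι α M : Type*} [Fintype ι] [DecidableEq ι] [Fintype α] [Zero M] [DecidableEq M]

def privateSupport (v : ι → α → M) (j : ι) : Finset α :=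
  {i | v j i ≠ 0 ∧ ∀ j', j' ≠ j → v j' i = 0}

variable (v : ι → α → M)

lemma mem_privateSupport {j : ι} {i : α} :
    i ∈ privateSupport v j ↔ v j i ≠ 0 ∧ ∀ j', j' ≠ j → v j' i = 0 := by
  simp [privateSupport]

lemma pairwiseDisjoint_privateSupport :
    (Set.univ : Set ι).PairwiseDisjoint (privateSupport v) := by
  intro j _ j' _ hjj'
  refine Finset.disjoint_left.mpr fun i hi hi' => ?_
  exact ((mem_privateSupport v).mp hi).1 (((mem_privateSupport v).mp hi').2 j hjj')

lemma card_privateSupport_le_hammingNorm (j : ι) : #(privateSupport v j) ≤ hammingNorm (v j) :=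
  Finset.card_le_card fun i hi =>
    Finset.mem_filter.mpr ⟨mem_univ i, ((mem_privateSupport v).mp hi).1⟩

lemma two_mul_card_le_sum_card_privateSupport_add [DecidableEq α] (hv : ∀ i, ∃ j, v j i ≠ 0) :
    2 * Fintype.card α ≤ ∑ j, #(privateSupport v j) + ∑ j, hammingNorm (v j) := by
  have hcomm : ∀ p : ι → α → Prop, ∀ [DecidableRel p],
      ∑ j, #{i | p j i} = ∑ i, #{j | p j i} := fun p _ => by
    simp only [Finset.card_filter]; exact Finset.sum_comm
  have hpoint : ∀ i, 2 ≤ #{j | i ∈ privateSupport v j} + #{j | v j i ≠ 0} := by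
    intro i
    obtain ⟨j, hj⟩ := hv i
    by_cases hpriv : ∀ j', j' ≠ j → v j' i = 0
    · have h1 : 0 < #{j | i ∈ privateSupport v j} :=
        Finset.card_pos.mpr ⟨j, by simpa [mem_privateSupport] using ⟨hj, hpriv⟩⟩
      have h2 : 0 < #{j | v j i ≠ 0} := Finset.card_pos.mpr ⟨j, by simpa using hj⟩
      omega
    · push Not at hpriv
      obtain ⟨j', hj'j, hj'⟩ := hpriv
      have : 1 < #{j | v j i ≠ 0} :=
        Finset.one_lt_card.mpr ⟨j, by simpa using hj, j', by simpa using hj', hj'j.symm⟩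
      omega
  have : ∑ j, #(privateSupport v j) = ∑ i, #{j | i ∈ privateSupport v j} := by
    simpa using hcomm fun j i => i ∈ privateSupport v j
  rw [this, show ∑ j, hammingNorm (v j) = ∑ i, #{j | v j i ≠ 0} from hcomm _,
    ← Finset.sum_add_distrib]
  simpa [Finset.mul_sum, mul_comm] using Finset.sum_le_sum fun i (_ : i ∈ univ) => hpoint i

lemma card_biUnion_powersetCard_privateSupport [DecidableEq α] {k : ℕ} (hk : 0 < k) :
    #(univ.biUnion fun j => (privateSupport v j).powersetCard k) =
      ∑ j, (#(privateSupport v j)).choose k := by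
  rw [Finset.card_biUnion]
  · simp only [Finset.card_powersetCard]
  · intro j _ j' _ hjj'
    refine Finset.disjoint_left.mpr fun a ha ha' => ?_
    obtain ⟨hsub, hcard⟩ := Finset.mem_powersetCard.mp ha
    obtain ⟨i, hi⟩ := Finset.card_pos.mp (show 0 < #a by omega)
    exact Finset.disjoint_left.mp (pairwiseDisjoint_privateSupport v (Set.mem_univ j)
      (Set.mem_univ j') hjj') (hsub hi) ((Finset.mem_powersetCard.mp ha').1 hi)

end PrivateSupport

lemma hammingNorm_indicator_one_le {α R : Type*} [Fintype α] [MulZeroOneClass R] [DecidableEq R]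
    (a : Finset α) : hammingNorm ((a : Set α).indicator (1 : α → R)) ≤ #a :=
  Finset.card_le_card fun i hi => by
    simpa using Set.mem_of_indicator_ne_zero (Finset.mem_filter.mp hi).2

section Pairs

variable {ι α : Type*} [Fintype ι] [DecidableEq ι] [Fintype α] [DecidableEq α]

lemma dotProduct_indicator_eq_zero {v : ι → α → ZMod 2} {j : ι} {a : Finset α}
    (ha : a ⊆ privateSupport v j) (hcard : #a = 2) (j' : ι) :
    v j' ⬝ᵥ (a : Set α).indicator 1 = 0 := by
  have hsum : v j' ⬝ᵥ (a : Set α).indicator 1 = ∑ i ∈ a, v j' i := by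
    simp [dotProduct, Set.indicator_apply, Finset.sum_ite_mem]
  rw [hsum]
  by_cases hj : j' = j
  · subst hj
    have hone : ∀ x : ZMod 2, x ≠ 0 → x = 1 := by decide
    rw [Finset.sum_congr rfl fun i hi => hone _ ((mem_privateSupport v).mp (ha hi)).1,
      Finset.sum_const, hcard]
    decide
  · exact Finset.sum_eq_zero fun i hi => ((mem_privateSupport v).mp (ha hi)).2 j' hj

lemma sum_choose_two_add_one_mul_two_pow_finrank_le {v : ι → α → ZMod 2}
    (hv : LinearIndependent (ZMod 2) v) {C : Submodule (ZMod 2) (α → ZMod 2)}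
    (hC : ∀ c ∈ C, ∀ j, v j ⬝ᵥ c = 0) (hdist : ∀ c ∈ C, c ≠ 0 → 5 ≤ hammingNorm c) :
    (∑ j, (#(privateSupport v j)).choose 2 + 1) * 2 ^ Module.finrank (ZMod 2) C ≤
      2 ^ (Fintype.card α - Fintype.card ι) := by
  set W := LinearMap.ker (Matrix.of v).mulVecLin
  have hmemW : ∀ x, x ∈ W ↔ ∀ j, v j ⬝ᵥ x = 0 := fun x => by
    simp [W, funext_iff, Matrix.mulVec]
  have hcard : ∀ U : Submodule (ZMod 2) (α → ZMod 2), Nat.card U = 2 ^ Module.finrank (ZMod 2) U :=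
    fun U => by rw [Module.natCard_eq_pow_finrank (K := ZMod 2), Nat.card_zmod]
  set P := univ.biUnion fun j => (privateSupport v j).powersetCard 2
  have hPcard : #P = ∑ j, (#(privateSupport v j)).choose 2 :=
    card_biUnion_powersetCard_privateSupport v two_pos
  set ind : Finset α → α → ZMod 2 := fun a => (a : Set α).indicator 1
  have hind : Function.Injective ind := fun a b h =>
    Finset.coe_inj.mp (Set.indicator_one_inj (ZMod 2) h)
  have hsmall : ∀ a ∈ insert ∅ P, #a ≤ 2 ∧ ∀ j, v j ⬝ᵥ ind a = 0 := by
    intro a ha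
    rcases Finset.mem_insert.mp ha with rfl | ha
    · simp [ind]
    · obtain ⟨j, -, ha⟩ := Finset.mem_biUnion.mp ha
      obtain ⟨hsub, hcard⟩ := Finset.mem_powersetCard.mp ha
      exact ⟨hcard.le, dotProduct_indicator_eq_zero hsub hcard⟩
  have hA := card_mul_card_le_of_hammingDist_lt (d := 5) (A := (insert ∅ P).image ind)
    (W := W) (fun c hc => (hmemW c).mpr (hC c hc)) hdist
    (by
      simp only [Finset.mem_image]
      rintro _ ⟨a, ha, rfl⟩
      exact (hmemW _).mpr (hsmall a ha).2)
    (by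
      simp only [Finset.mem_image]
      rintro _ ⟨a, ha, rfl⟩ _ ⟨b, hb, rfl⟩
      have := hammingDist_triangle (ind a) 0 (ind b)
      rw [hammingDist_zero_right, hammingDist_zero_left] at this
      have : hammingNorm (ind a) ≤ #a := hammingNorm_indicator_one_le a
      have : hammingNorm (ind b) ≤ #b := hammingNorm_indicator_one_le b
      have := (hsmall a ha).1; have := (hsmall b hb).1
      omega)
  rwa [Finset.card_image_of_injective _ hind, Finset.card_insert_of_notMem (by simp [P]),
    hPcard, hcard, hcard, finrank_ker_mulVecLin_of_linearIndependent hv] at hA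

end Pairs

theorem finrank_add_le_of_linearIndependent_checks {ι α : Type*} [Fintype ι] [DecidableEq ι]
    [Fintype α] [DecidableEq α] {m r s : ℕ} {C : Submodule (ZMod 2) (α → ZMod 2)}
    {v : ι → α → ZMod 2} (hv : LinearIndependent (ZMod 2) v) (hcov : ∀ i, ∃ j, v j i ≠ 0)
    (hwt : ∀ j, hammingNorm (v j) ≤ r + 1) (hC : ∀ c ∈ C, ∀ j, v j ⬝ᵥ c = 0)
    (hdist : ∀ c ∈ C, c ≠ 0 → 5 ≤ hammingNorm c) (hα : Fintype.card α = m * (r + 1))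
    (hm : 8 ≤ m) (hmr : (s + 2) * (r + 2) ≤ m * r) (hs : 2 ^ s ≤ m * r * (r + 1)) :
    Module.finrank (ZMod 2) C + s ≤ m * r := by
  set N := ∑ j, #(privateSupport v j)
  set P := ∑ j, (#(privateSupport v j)).choose 2
  have hwt' : ∑ j, hammingNorm (v j) ≤ Fintype.card ι * (r + 1) := by
    simpa using Finset.sum_le_sum fun j (_ : j ∈ univ) => hwt j
  have hN : N ≤ ∑ j, hammingNorm (v j) :=
    Finset.sum_le_sum fun j _ => card_privateSupport_le_hammingNorm v j
  have hcount := two_mul_card_le_sum_card_privateSupport_add v hcov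
  have hpack := sum_choose_two_add_one_mul_two_pow_finrank_le hv hC hdist
  rw [hα] at hcount hpack
  have hmℓ : m ≤ Fintype.card ι := Nat.le_of_mul_le_mul_right (by omega) (by omega : 0 < r + 1)
  have hmr' : m * (r + 1) = m * r + m := by ring
  rcases lt_or_ge (Fintype.card ι) (m + s) with hℓ | hℓ
  · have hP := two_pow_le_two_pow_mul hm hmr hs hmℓ hℓ (N := N) (P := P) (by omega)
      (by simpa using sq_sum_le_card_mul_sum_choose_two univ fun j => #(privateSupport v j))
    have := add_lt_of_two_pow_le_two_pow_mul hP hpack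
    omega
  · have : 2 ^ Module.finrank (ZMod 2) C ≤ 2 ^ (m * (r + 1) - Fintype.card ι) :=
      le_trans (Nat.le_mul_of_pos_left _ (by omega)) hpack
    have := (Nat.pow_le_pow_iff_right (by norm_num : 1 < 2)).mp this
    have : s ≤ m * r := le_trans (by nlinarith) hmr
    omega

theorem finrank_add_le_of_locality {α : Type*} [Fintype α] [DecidableEq α] {m r s : ℕ}
    {C : Submodule (ZMod 2) (α → ZMod 2)} (hα : Fintype.card α = m * (r + 1)) (hm : 8 ≤ m)
    (hmr : (s + 2) * (r + 2) ≤ m * r) (hs : 2 ^ s ≤ m * r * (r + 1))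
    (hdist : ∀ c ∈ C, c ≠ 0 → 5 ≤ hammingNorm c)
    (hloc : ∀ i, ∃ h : α → ZMod 2, (∀ c ∈ C, h ⬝ᵥ c = 0) ∧ h i ≠ 0 ∧ hammingNorm h ≤ r + 1) :
    Module.finrank (ZMod 2) C + s ≤ m * r := by
  obtain ⟨b, hbH, hli, hcov⟩ := exists_linearIndependent_cover
    {h : α → ZMod 2 | (∀ c ∈ C, h ⬝ᵥ c = 0) ∧ hammingNorm h ≤ r + 1}
    fun i => (hloc i).imp fun h hh => ⟨⟨hh.1, hh.2.2⟩, hh.2.1⟩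
  classical
  have : Fintype b := Fintype.ofFinite b
  exact finrank_add_le_of_linearIndependent_checks hli
    (fun i => (hcov i).elim fun h hh => ⟨⟨h, hh.1⟩, hh.2⟩) (fun j => (hbH j.2).2)
    (fun c hc j => (hbH j.2).1 c hc) hdist hα hm hmr hs

theorem stmt_16_general (s t : ℕ) (ht : 0 < t) (hdvd : 2 * t ∣ s)
    (hst : 2 ≤ s / (2 * t)) (hne : ¬(s = 4 ∧ t = 1))
    (r n : ℕ) (hr : r = 2 ^ t) (hn : n = (2 ^ s - 1) / (2 ^ t - 1))
    (k : ℕ) (C : Submodule (ZMod 2) (Fin n → ZMod 2))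
    (hk : Module.finrank (ZMod 2) C = k)
    (hdist : ∀ c ∈ C, c ≠ 0 → 5 ≤ hammingNorm c)
    (hloc : ∀ i : Fin n, ∃ h : Fin n → ZMod 2,
      (∀ c ∈ C, ∑ i', h i' * c i' = 0) ∧ h i ≠ 0 ∧ hammingNorm h ≤ r + 1) :
    (k : ℤ) ≤ ((r * n / (r + 1) : ℕ) : ℤ) - (s : ℤ) := by
  obtain ⟨q, rfl⟩ := hdvd
  have hq : 2 ≤ q := by rwa [Nat.mul_div_cancel_left q (by omega)] at hst
  obtain ⟨m, hnm, hm, hmr, hs⟩ :=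
    exists_div_two_pow_sub_one_eq_mul ht hq (by rintro ⟨rfl, rfl⟩; exact hne ⟨rfl, rfl⟩)
  rw [← hn, ← hr] at hnm
  rw [← hr] at hmr hs
  have := finrank_add_le_of_locality (by simp [hnm]) hm hmr hs hdist hloc
  have hdiv : r * n / (r + 1) = m * r := by
    rw [hnm, show r * (m * (r + 1)) = m * r * (r + 1) by ring, Nat.mul_div_cancel _ (by omega)]
  rw [hdiv]
  omega

/-- Optimality statement in Theorem 4 of the paper: for positive integers `s, t`
with `2t ∣ s`, `s/(2t) ≥ 2` and `(s,t) ≠ (4,1)`, with `r = 2^t` and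
`n = (2^s − 1)/(2^t − 1)`, every `k`-dimensional binary linear code of length `n`,
minimum Hamming weight at least `5` and locality `r` satisfies
`k ≤ rn/(r+1) − s`. -/
theorem stmt_16 (s t : ℕ) (hs : 0 < s) (ht : 0 < t) (hdvd : 2 * t ∣ s)
    (hst : 2 ≤ s / (2 * t)) (hne : ¬(s = 4 ∧ t = 1))
    (r n : ℕ) (hr : r = 2 ^ t) (hn : n = (2 ^ s - 1) / (2 ^ t - 1))
    (k : ℕ) (C : Submodule (ZMod 2) (Fin n → ZMod 2))
    (hk : Module.finrank (ZMod 2) C = k)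
    (hdist : ∀ c ∈ C, c ≠ 0 → 5 ≤ hammingNorm c)
    (hloc : ∀ i : Fin n, ∃ h : Fin n → ZMod 2,
      (∀ c ∈ C, ∑ i', h i' * c i' = 0) ∧ h i ≠ 0 ∧ hammingNorm h ≤ r + 1) :
    (k : ℤ) ≤ ((r * n / (r + 1) : ℕ) : ℤ) - (s : ℤ) :=
  stmt_16_general s t ht hdvd hst hne r n hr hn k C hk hdist hloc
end
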